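/- arXiv:1706.05496 — 2 statements merged into one kernel-verified Lean document; each statement's English description precedes it below -/
import Mathlib

section
/- For the complete bipartite graph K_{p,q}, the extension complexity of its stable set polytope satisfies xc(STAB(K_{p,q})) ≤ 2p + 2q + 3. -/
/-- A polytope is the convex hull of a finite set of points. -/
def IsPolytope {E : Type*} [AddCommGroup E] [Module ℝ E] (P : Set E) : Prop :=
  ∃ F : Set E, F.Finite ∧ P = convexHull ℝ F

/-- An (exposed) face of a set `Q ⊆ ℝ^κ`. -/
def IsExposedFace {κ : Type*} [Fintype κ] (Q F : Set (κ → ℝ)) : Prop :=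
  F ⊆ Q ∧ ∃ (c : κ → ℝ) (α : ℝ), (∀ y ∈ Q, ∑ i, c i * y i ≤ α) ∧
    F = {y ∈ Q | ∑ i, c i * y i = α}

/-- A facet of `Q`: a maximal proper nonempty face of `Q`. -/
def IsFacet {κ : Type*} [Fintype κ] (Q F : Set (κ → ℝ)) : Prop :=
  IsExposedFace Q F ∧ F.Nonempty ∧ F ≠ Q ∧
    ∀ F' : Set (κ → ℝ), IsExposedFace Q F' → F'.Nonempty → F' ≠ Q → F ⊆ F' → F' = F

/-- The size of a polytope: its number of facets. -/
noncomputable def polySize {κ : Type*} [Fintype κ] (Q : Set (κ → ℝ)) : ℕ :=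
  {F : Set (κ → ℝ) | IsFacet Q F}.ncard

/-- `Q` is an extension of `P` if `Q` is a polytope and some linear map sends `Q` onto `P`. -/
def IsExtension {ι κ : Type*} [Fintype ι] [Fintype κ]
    (P : Set (ι → ℝ)) (Q : Set (κ → ℝ)) : Prop :=
  IsPolytope Q ∧ ∃ π : (κ → ℝ) →ₗ[ℝ] (ι → ℝ), π '' Q = P

/-- The extension complexity of `P`: the minimum number of facets of an extension of `P`. -/
noncomputable def xc {ι : Type*} [Fintype ι] (P : Set (ι → ℝ)) : ℕ :=
  sInf {r : ℕ | ∃ (k : ℕ) (Q : Set (Fin k → ℝ)), IsExtension P Q ∧ polySize Q = r}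

/-- The stable set polytope of a graph: the convex hull of the characteristic vectors of
its independent (stable) sets. -/
def stab {V : Type*} [Fintype V] (G : SimpleGraph V) : Set (V → ℝ) :=
  convexHull ℝ {x : V → ℝ |
    ∃ S : Set V, (∀ u ∈ S, ∀ v ∈ S, ¬ G.Adj u v) ∧ x = S.indicator 1}

/-!
Lift `STAB(K_{α,β})` to `ℝ^{α ⊕ β ⊕ {t}}` as the polytope `Q` cut out by `0 ≤ x_a ≤ t`,
`0 ≤ y_b ≤ 1 - t`, `0 ≤ t ≤ 1`: its slice `t = 1` is the cube on the `α`-side and its slice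
`t = 0` the cube on the `β`-side, and `Q` is the convex hull of these two faces. Since the stable
sets of `K_{α,β}` are exactly the subsets of one side, forgetting `t` maps `Q` onto the stable set
polytope. Every facet of a polytope given by finitely many inequalities is cut out by one of
them, so `Q` has at most `2|α| + 2|β| + 2` facets.
-/

open Set Filter Topology

section ExposedFace

variable {κ : Type*} [Fintype κ] {Q F : Set (κ → ℝ)}

theorem IsExposedFace.convex (hF : IsExposedFace Q F) (hQ : Convex ℝ Q) : Convex ℝ F := by
  obtain ⟨-, c, α, -, rfl⟩ := hF
  exact hQ.inter <| convex_hyperplane (f := (c ⬝ᵥ ·))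
    ⟨dotProduct_add c, fun r y => dotProduct_smul r c y⟩ α

theorem IsExposedFace.mem_of_add_smul_sub_mem (hF : IsExposedFace Q F) {z w : κ → ℝ}
    (hz : z ∈ F) (hw : w ∈ Q) {ε : ℝ} (hε : 0 < ε) (h : z + ε • (z - w) ∈ Q) : w ∈ F := by
  obtain ⟨-, c, α, hle, rfl⟩ := hF
  have hzα : c ⬝ᵥ z = α := hz.2
  have hout : c ⬝ᵥ (z + ε • (z - w)) ≤ α := hle _ h
  rw [dotProduct_add, dotProduct_smul, dotProduct_sub, smul_eq_mul, hzα] at hout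
  refine ⟨hw, le_antisymm (hle w hw) ?_⟩
  change α ≤ c ⬝ᵥ w
  nlinarith

end ExposedFace

theorem IsPolytope.image {E F : Type*} [AddCommGroup E] [Module ℝ E] [AddCommGroup F]
    [Module ℝ F] {P : Set E} (hP : IsPolytope P) (f : E →ₗ[ℝ] F) : IsPolytope (f '' P) := by
  obtain ⟨V, hV, rfl⟩ := hP
  exact ⟨f '' V, hV.image f, f.image_convexHull V⟩

theorem IsExtension.image_linearEquiv {ι κ κ' : Type*} [Fintype ι] [Fintype κ] [Fintype κ']
    {P : Set (ι → ℝ)} {Q : Set (κ → ℝ)} (h : IsExtension P Q) (L : (κ → ℝ) ≃ₗ[ℝ] (κ' → ℝ)) :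
    IsExtension P (L '' Q) := by
  obtain ⟨hQ, π, hπ⟩ := h
  refine ⟨hQ.image L.toLinearMap, π ∘ₗ L.symm.toLinearMap, ?_⟩
  simpa [image_image] using hπ

section Polyhedron

variable {κ J : Type*} [Fintype κ] (a : J → κ → ℝ) (b : J → ℝ)

def polyhedron : Set (κ → ℝ) := {z | ∀ j, a j ⬝ᵥ z ≤ b j}

def tightFace (j : J) : Set (κ → ℝ) := {z ∈ polyhedron a b | a j ⬝ᵥ z = b j}

theorem convex_polyhedron : Convex ℝ (polyhedron a b) := by
  intro x hx y hy s t hs ht hst j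
  rw [dotProduct_add, dotProduct_smul, dotProduct_smul, smul_eq_mul, smul_eq_mul]
  have hxj : a j ⬝ᵥ x ≤ b j := hx j
  have hyj : a j ⬝ᵥ y ≤ b j := hy j
  have hb : b j = s * b j + t * b j := by rw [← add_mul, hst, one_mul]
  nlinarith [mul_le_mul_of_nonneg_left hxj hs, mul_le_mul_of_nonneg_left hyj ht]

theorem isExposedFace_tightFace (j : J) : IsExposedFace (polyhedron a b) (tightFace a b j) :=
  ⟨sep_subset _ _, a j, b j, fun _ hy => hy j, rfl⟩

theorem image_funCongrLeft_polyhedron {κ' : Type*} [Fintype κ'] (e : κ' ≃ κ) :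
    LinearEquiv.funCongrLeft ℝ ℝ e '' polyhedron a b = polyhedron (fun j => a j ∘ e) b := by
  ext w
  rw [LinearEquiv.image_eq_preimage_symm]
  exact forall_congr' fun j => by rw [← dotProduct_comp_equiv_symm]; rfl

variable {a b}

theorem exists_pos_add_smul_sub_mem_polyhedron [Finite J] {z w : κ → ℝ}
    (hz : z ∈ polyhedron a b) (h : ∀ j, a j ⬝ᵥ z < b j ∨ a j ⬝ᵥ w = b j) :
    ∃ ε : ℝ, 0 < ε ∧ z + ε • (z - w) ∈ polyhedron a b := by
  have hval (j : J) (ε : ℝ) :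
      a j ⬝ᵥ (z + ε • (z - w)) = a j ⬝ᵥ z + ε * (a j ⬝ᵥ z - a j ⬝ᵥ w) := by
    rw [dotProduct_add, dotProduct_smul, dotProduct_sub, smul_eq_mul]
  have hev : ∀ᶠ ε in 𝓝[>] (0 : ℝ), z + ε • (z - w) ∈ polyhedron a b := by
    simp only [polyhedron, mem_ofPred_eq, eventually_all, hval]
    intro j
    rcases h j with hlt | heq
    · have hcont : Continuous fun ε : ℝ => a j ⬝ᵥ z + ε * (a j ⬝ᵥ z - a j ⬝ᵥ w) := by fun_prop
      have hlim := hcont.tendsto' 0 (a j ⬝ᵥ z) (by simp)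
      exact ((hlim.eventually (gt_mem_nhds hlt)).filter_mono nhdsWithin_le_nhds).mono
        fun _ => le_of_lt
    · filter_upwards [self_mem_nhdsWithin] with ε (hε : 0 < ε)
      nlinarith [hz j]
  obtain ⟨ε, hmem, hε⟩ := (hev.and self_mem_nhdsWithin).exists
  exact ⟨ε, hε, hmem⟩

theorem exists_forall_mem_finset_lt {F : Set (κ → ℝ)} (hF : Convex ℝ F) (hne : F.Nonempty)
    (hFQ : F ⊆ polyhedron a b) (s : Finset J) (hs : ∀ j ∈ s, ∃ z ∈ F, a j ⬝ᵥ z < b j) :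
    ∃ z ∈ F, ∀ j ∈ s, a j ⬝ᵥ z < b j := by
  classical
  induction s using Finset.induction_on with
  | empty => exact hne.imp fun z hz => ⟨hz, by simp⟩
  | insert j₀ s _ ih =>
    obtain ⟨z, hzF, hz⟩ := ih fun j hj => hs j (Finset.mem_insert_of_mem hj)
    obtain ⟨w, hwF, hw⟩ := hs j₀ (Finset.mem_insert_self j₀ s)
    refine ⟨(1 / 2 : ℝ) • z + (1 / 2 : ℝ) • w,
      hF hzF hwF (by norm_num) (by norm_num) (by norm_num), fun j hj => ?_⟩
    have hzj : a j ⬝ᵥ z ≤ b j := hFQ hzF j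
    have hwj : a j ⬝ᵥ w ≤ b j := hFQ hwF j
    rw [dotProduct_add, dotProduct_smul, dotProduct_smul, smul_eq_mul, smul_eq_mul]
    rcases Finset.mem_insert.1 hj with rfl | hj
    · linarith
    · linarith [hz j hj]

variable [Fintype J]

/- If `F` were none of the tight faces, every constraint would be either an implicit equality of
the polyhedron or strict at some point of `F`, so some `z ∈ F` would be strict for all constraints
of the second kind. From such a `z` one can step slightly beyond any point `w` of the polyhedron,
so the face `F` would contain `w`. -/
theorem IsFacet.exists_eq_tightFace {F : Set (κ → ℝ)} (hF : IsFacet (polyhedron a b) F) :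
    ∃ j, F = tightFace a b j := by
  classical
  obtain ⟨hexp, hne, hneQ, hmax⟩ := hF
  by_contra! hF_ne
  have hdich : ∀ j, (∃ z ∈ F, a j ⬝ᵥ z < b j) ∨ ∀ w ∈ polyhedron a b, a j ⬝ᵥ w = b j := by
    intro j
    by_contra! h
    obtain ⟨hF_tight, w, hwQ, hw⟩ := h
    have hsub : F ⊆ tightFace a b j := fun z hz =>
      ⟨hexp.1 hz, le_antisymm (hexp.1 hz j) (hF_tight z hz)⟩
    have hproper : tightFace a b j ≠ polyhedron a b := fun h => hw (h ▸ hwQ).2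
    exact hF_ne j (hmax _ (isExposedFace_tightFace a b j) (hne.mono hsub) hproper hsub).symm
  obtain ⟨z, hzF, hz⟩ := exists_forall_mem_finset_lt (hexp.convex (convex_polyhedron a b)) hne
    hexp.1 {j | ∃ z ∈ F, a j ⬝ᵥ z < b j} (by simp)
  refine hneQ (hexp.1.antisymm fun w hw => ?_)
  obtain ⟨ε, hε, hmem⟩ := exists_pos_add_smul_sub_mem_polyhedron (hexp.1 hzF) fun j =>
    (hdich j).imp (fun hj => hz j (by simpa using hj)) fun hj => hj w hw
  exact hexp.mem_of_add_smul_sub_mem hzF hw hε hmem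

theorem polySize_polyhedron_le : polySize (polyhedron a b) ≤ Fintype.card J :=
  calc polySize (polyhedron a b) ≤ (range (tightFace a b)).ncard :=
        ncard_le_ncard (fun F hF => hF.exists_eq_tightFace.imp fun _ hj => hj.symm)
          (finite_range _)
    _ ≤ Fintype.card J := by
        rw [← Nat.card_coe_set_eq, ← Nat.card_eq_fintype_card]
        exact Finite.card_range_le _

theorem xc_le_card_of_isExtension_polyhedron {ι : Type*} [Fintype ι] {P : Set (ι → ℝ)}
    (h : IsExtension P (polyhedron a b)) : xc P ≤ Fintype.card J := by
  have hext := h.image_linearEquiv (LinearEquiv.funCongrLeft ℝ ℝ (Fintype.equivFin κ).symm)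
  rw [image_funCongrLeft_polyhedron] at hext
  exact le_trans (Nat.sInf_le ⟨_, _, hext, rfl⟩) polySize_polyhedron_le

end Polyhedron

theorem image_comp_some_univ_pi_optionElim {V M : Type*} (c : M) (s : V → Set M) :
    (· ∘ some) '' univ.pi (fun k => k.elim {c} s) = univ.pi s := by
  ext x
  constructor
  · rintro ⟨z, hz, rfl⟩ v -
    exact hz (some v) (mem_univ _)
  · intro hx
    refine ⟨fun k => k.elim c x, fun k _ => ?_, rfl⟩
    cases k
    · rfl
    · exact hx _ (mem_univ _)

section CompleteBipartite

variable (α β : Type*)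

def leftCubeFactor : α ⊕ β → Set ℝ := Sum.elim (fun _ => {0, 1}) fun _ => {0}

def rightCubeFactor : α ⊕ β → Set ℝ := Sum.elim (fun _ => {0}) fun _ => {0, 1}

theorem stable_indicators_completeBipartiteGraph :
    {x : α ⊕ β → ℝ | ∃ S : Set (α ⊕ β),
      (∀ u ∈ S, ∀ v ∈ S, ¬ (completeBipartiteGraph α β).Adj u v) ∧ x = S.indicator 1} =
      univ.pi (leftCubeFactor α β) ∪ univ.pi (rightCubeFactor α β) := by
  ext x
  constructor
  · rintro ⟨S, hS, rfl⟩
    by_cases hβ : ∃ b, Sum.inr b ∈ S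
    · obtain ⟨b, hb⟩ := hβ
      have hα : ∀ a, Sum.inl a ∉ S := fun a ha => hS _ ha _ hb (by simp)
      refine Or.inr fun v _ => ?_
      rcases v with a | b'
      · simp [indicator_of_notMem (hα a), rightCubeFactor]
      · by_cases h : Sum.inr b' ∈ S <;> simp [h, rightCubeFactor]
    · push Not at hβ
      refine Or.inl fun v _ => ?_
      rcases v with a | b
      · by_cases h : Sum.inl a ∈ S <;> simp [h, leftCubeFactor]
      · simp [indicator_of_notMem (hβ b), leftCubeFactor]
  · intro hx
    simp only [mem_union, mem_univ_pi, Sum.forall, leftCubeFactor, rightCubeFactor, Sum.elim_inl,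
      Sum.elim_inr, mem_insert_iff, mem_singleton_iff] at hx
    have h01 : ∀ v, x v = 0 ∨ x v = 1 := by
      rintro (a | b) <;> rcases hx with ⟨ha, hb⟩ | ⟨ha, hb⟩ <;> simp [ha, hb]
    refine ⟨{v | x v = 1}, ?_, funext fun v => ?_⟩
    · rintro (a | b) hu (a' | b') hv hadj <;> simp only [completeBipartiteGraph_adj] at hadj <;>
        rcases hx with ⟨-, h⟩ | ⟨h, -⟩ <;> simp_all
    · rcases h01 v with h | h <;> simp [indicator, h]

/- The coordinates `some (inl a)`, `some (inr b)` and `none` of the lift are `x_a`, `y_b` and `t`.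
The constraint `(k, false)` is `0 ≤ z k`; the constraints `(k, true)` are `t ≤ 1`, `x_a ≤ t` and
`y_b + t ≤ 1`. -/
def bipartiteLiftLhs [DecidableEq α] [DecidableEq β] :
    Option (α ⊕ β) × Bool → Option (α ⊕ β) → ℝ
  | (k, false) => -Pi.single k 1
  | (none, true) => Pi.single none 1
  | (some (.inl a), true) => Pi.single (some (.inl a)) 1 - Pi.single none 1
  | (some (.inr b), true) => Pi.single (some (.inr b)) 1 + Pi.single none 1

def bipartiteLiftRhs : Option (α ⊕ β) × Bool → ℝ
  | (some (.inl _), true) => 0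
  | (_, true) => 1
  | (_, false) => 0

def bipartiteLiftVertices : Set (Option (α ⊕ β) → ℝ) :=
  univ.pi (fun k => k.elim {1} (leftCubeFactor α β)) ∪
    univ.pi (fun k => k.elim {0} (rightCubeFactor α β))

variable [Fintype α] [Fintype β]

theorem finite_bipartiteLiftVertices : (bipartiteLiftVertices α β).Finite := by
  refine .union (.pi fun k => ?_) (.pi fun k => ?_) <;>
    rcases k with _ | a | b <;> simp [leftCubeFactor, rightCubeFactor]

variable [DecidableEq α] [DecidableEq β]

def bipartiteLift : Set (Option (α ⊕ β) → ℝ) :=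
  polyhedron (bipartiteLiftLhs α β) (bipartiteLiftRhs α β)

variable {α β} in
theorem mem_bipartiteLift_iff {z : Option (α ⊕ β) → ℝ} :
    z ∈ bipartiteLift α β ↔ (∀ k, 0 ≤ z k) ∧ z none ≤ 1 ∧
      (∀ a, z (some (.inl a)) ≤ z none) ∧ ∀ b, z (some (.inr b)) + z none ≤ 1 := by
  simp only [bipartiteLift, polyhedron, mem_ofPred_eq, Prod.forall, Bool.forall_bool,
    forall_and, Option.forall, Sum.forall, bipartiteLiftLhs, bipartiteLiftRhs, neg_dotProduct,
    sub_dotProduct, add_dotProduct, single_dotProduct, one_mul, neg_nonpos, sub_nonpos]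

theorem bipartiteLiftVertices_subset : bipartiteLiftVertices α β ⊆ bipartiteLift α β := by
  rintro z (hz | hz) <;>
    simp only [mem_univ_pi, Option.forall, Sum.forall, Option.elim, leftCubeFactor,
      rightCubeFactor, Sum.elim_inl, Sum.elim_inr, mem_insert_iff, mem_singleton_iff] at hz <;>
    simp only [mem_bipartiteLift_iff, Option.forall, Sum.forall] <;>
    grind

theorem bipartiteLift_subset_convexHull :
    bipartiteLift α β ⊆ convexHull ℝ (bipartiteLiftVertices α β) := by
  intro z hz
  obtain ⟨h0, ht1, hx, hy⟩ := mem_bipartiteLift_iff.1 hz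
  set t := z none
  -- `z = t • (x / t, 0, 1) + (1 - t) • (0, y / (1 - t), 0)`; when `t = 0` also `x = 0`, so the
  -- junk value `x / 0 = 0` does no harm (likewise for `t = 1`).
  let u : Option (α ⊕ β) → ℝ := fun k => k.elim 1 (Sum.elim (fun a => z (some (.inl a)) / t) 0)
  let w : Option (α ⊕ β) → ℝ :=
    fun k => k.elim 0 (Sum.elim 0 fun b => z (some (.inr b)) / (1 - t))
  have hu : u ∈ convexHull ℝ (univ.pi fun k => k.elim {1} (leftCubeFactor α β)) := by
    rw [convexHull_pi]
    rintro (_ | a | b) -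
    · simp [u]
    · simp only [u, Option.elim, leftCubeFactor, Sum.elim_inl, convexHull_pair,
        segment_eq_Icc zero_le_one]
      exact ⟨div_nonneg (h0 _) (h0 none), div_le_one_of_le₀ (hx a) (h0 none)⟩
    · simp [u, leftCubeFactor]
  have hw : w ∈ convexHull ℝ (univ.pi fun k => k.elim {0} (rightCubeFactor α β)) := by
    rw [convexHull_pi]
    rintro (_ | a | b) -
    · simp [w]
    · simp [w, rightCubeFactor]
    · simp only [w, Option.elim, rightCubeFactor, Sum.elim_inr, convexHull_pair,
        segment_eq_Icc zero_le_one]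
      exact ⟨div_nonneg (h0 _) (by linarith), div_le_one_of_le₀ (by linarith [hy b]) (by linarith)⟩
  have hz : z = t • u + (1 - t) • w := by
    funext k
    rcases k with _ | a | b
    · simp [u, w, t]
    · simp only [Pi.add_apply, Pi.smul_apply, smul_eq_mul, u, w, Option.elim, Sum.elim_inl,
        Pi.zero_apply, mul_zero, add_zero]
      exact (mul_div_cancel_of_imp' fun h => le_antisymm (h ▸ hx a) (h0 _)).symm
    · simp only [Pi.add_apply, Pi.smul_apply, smul_eq_mul, u, w, Option.elim, Sum.elim_inr,
        Pi.zero_apply, mul_zero, zero_add]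
      exact (mul_div_cancel_of_imp' fun h => le_antisymm (by linarith [hy b]) (h0 _)).symm
  rw [hz]
  exact convex_convexHull ℝ _ (convexHull_mono subset_union_left hu)
    (convexHull_mono subset_union_right hw) (h0 none) (by linarith) (by ring)

theorem bipartiteLift_eq_convexHull :
    bipartiteLift α β = convexHull ℝ (bipartiteLiftVertices α β) :=
  (bipartiteLift_subset_convexHull α β).antisymm
    (convexHull_min (bipartiteLiftVertices_subset α β) (convex_polyhedron _ _))

theorem isExtension_bipartiteLift :
    IsExtension (stab (completeBipartiteGraph α β)) (bipartiteLift α β) := by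
  refine ⟨⟨_, finite_bipartiteLiftVertices α β, bipartiteLift_eq_convexHull α β⟩,
    LinearMap.funLeft ℝ ℝ some, ?_⟩
  rw [bipartiteLift_eq_convexHull, LinearMap.image_convexHull, stab,
    stable_indicators_completeBipartiteGraph, bipartiteLiftVertices, image_union]
  exact congrArg _ (congrArg₂ _ (image_comp_some_univ_pi_optionElim _ _)
    (image_comp_some_univ_pi_optionElim _ _))

theorem xc_stab_completeBipartiteGraph_le :
    xc (stab (completeBipartiteGraph α β)) ≤ 2 * Fintype.card α + 2 * Fintype.card β + 2 := by
  have := xc_le_card_of_isExtension_polyhedron (isExtension_bipartiteLift α β)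
  simp only [Fintype.card_prod, Fintype.card_option, Fintype.card_sum, Fintype.card_bool] at this
  omega

end CompleteBipartite

/-- for the complete bipartite graph `K_{p,q}`,
`xc (STAB K_{p,q}) ≤ 2p + 2q + 3`. -/
theorem xc_stab_completeBipartite (p q : ℕ) :
    xc (stab (completeBipartiteGraph (Fin p) (Fin q))) ≤ 2 * p + 2 * q + 3 :=
  (xc_stab_completeBipartiteGraph_le (Fin p) (Fin q)).trans (by simp)
end

section
/- If G is the complement of the disjoint union of p edges (i.e., the complement of a perfect matching on 2p vertices), then xc(STAB(G)) ≤ 4p + 1. -/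
/-- The disjoint union of `p` edges: a perfect matching on `2p` vertices, with edges
exactly `{(i, false), (i, true)}` for `i ∈ [p]`. -/
def matchingGraph (p : ℕ) : SimpleGraph (Fin p × Bool) :=
  SimpleGraph.fromRel fun a b => a.1 = b.1

/-!
Any two vertices lying on different edges of the matching are adjacent in `G`, so every stable
set of `G` is a subset of a single matching edge `{vᵢ, wᵢ}`. Hence `STAB(G)` is the convex hull
of at most `4p + 1` points, indexed by `∅` and by the pairs `(i, B)` with `B ⊆ {vᵢ, wᵢ}`. A
polytope with `N` vertices is a linear image of the standard simplex in `ℝ^N`, whose only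
facets are the `N` coordinate faces `{yⱼ = 0}`.
-/

open Set

section StdSimplex

variable {κ : Type*} [Fintype κ]

lemma isExposedFace_stdSimplex_apply_eq_zero (j : κ) :
    IsExposedFace (stdSimplex ℝ κ) {y ∈ stdSimplex ℝ κ | y j = 0} := by
  classical
  refine ⟨sep_subset _ _, -Pi.single j 1, 0, fun y hy => ?_, ?_⟩
  · simpa [Pi.single_apply] using hy.1 j
  · ext y
    simp [Pi.single_apply]

lemma IsExposedFace.exists_subset_apply_eq_zero {F : Set (κ → ℝ)}
    (hF : IsExposedFace (stdSimplex ℝ κ) F) (hne : F ≠ stdSimplex ℝ κ) :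
    ∃ j, F ⊆ {y | y j = 0} := by
  classical
  obtain ⟨-, c, α, hle, rfl⟩ := hF
  have hc : ∀ i, c i ≤ α := fun i => by
    simpa [mul_ite, Finset.sum_ite_eq] using hle _ (ite_eq_mem_stdSimplex ℝ i)
  obtain ⟨j, hj⟩ : ∃ j, c j < α := by
    by_contra! hα
    refine hne (sep_eq_self_iff_mem_true.2 fun y hy => ?_)
    calc ∑ i, c i * y i = ∑ i, α * y i := by
          simp only [fun i => le_antisymm (hc i) (hα i)]
      _ = α := by rw [← Finset.mul_sum, hy.2, mul_one]
  refine ⟨j, fun x ⟨hx, hxα⟩ => ?_⟩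
  have hzero : ∑ i, (α - c i) * x i = 0 := by
    simp [sub_mul, Finset.sum_sub_distrib, ← Finset.mul_sum, hx.2, hxα]
  have hterm := (Finset.sum_eq_zero_iff_of_nonneg fun i _ =>
    mul_nonneg (sub_nonneg.2 (hc i)) (hx.1 i)).1 hzero j (Finset.mem_univ j)
  exact (mul_eq_zero.1 hterm).resolve_left (sub_ne_zero.2 hj.ne')

lemma IsFacet.exists_eq_stdSimplex_apply_eq_zero {F : Set (κ → ℝ)}
    (hF : IsFacet (stdSimplex ℝ κ) F) : ∃ j, F = {y ∈ stdSimplex ℝ κ | y j = 0} := by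
  classical
  obtain ⟨hexp, hne, hneq, hmax⟩ := hF
  obtain ⟨j, hj⟩ := hexp.exists_subset_apply_eq_zero hneq
  have hFj : F ⊆ {y ∈ stdSimplex ℝ κ | y j = 0} := fun y hy => ⟨hexp.1 hy, hj hy⟩
  refine ⟨j, (hmax _ (isExposedFace_stdSimplex_apply_eq_zero j) (hne.mono hFj) ?_ hFj).symm⟩
  intro h
  have hsingle : Pi.single j (1 : ℝ) ∈ {y ∈ stdSimplex ℝ κ | y j = 0} :=
    by rw [h]; exact single_mem_stdSimplex ℝ j
  simpa using hsingle.2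

lemma polySize_stdSimplex_le : polySize (stdSimplex ℝ κ) ≤ Fintype.card κ :=
  calc polySize (stdSimplex ℝ κ)
      ≤ (range fun j : κ => {y ∈ stdSimplex ℝ κ | y j = 0}).ncard :=
        ncard_le_ncard (fun _ hF => (hF.exists_eq_stdSimplex_apply_eq_zero).imp fun _ => Eq.symm)
          (finite_range _)
    _ ≤ Nat.card κ := by
        rw [← image_univ, ← ncard_univ]
        exact ncard_image_le finite_univ
    _ = Fintype.card κ := Nat.card_eq_fintype_card

lemma image_stdSimplex_linearCombination {E : Type*} [AddCommGroup E] [Module ℝ E]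
    (f : κ → E) : Fintype.linearCombination ℝ f '' stdSimplex ℝ κ = convexHull ℝ (range f) := by
  classical
  rw [← convexHull_rangle_single_eq_stdSimplex, LinearMap.image_convexHull, ← range_comp]
  simp [Function.comp_def]

end StdSimplex

lemma xc_le_polySize {ι : Type*} [Fintype ι] {P : Set (ι → ℝ)} {k : ℕ} {Q : Set (Fin k → ℝ)}
    (h : IsExtension P Q) : xc P ≤ polySize Q :=
  Nat.sInf_le ⟨k, Q, h, rfl⟩

lemma xc_convexHull_range_le {ι κ : Type*} [Fintype ι] [Fintype κ] (f : κ → ι → ℝ) :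
    xc (convexHull ℝ (range f)) ≤ Fintype.card κ := by
  classical
  set g := f ∘ (Fintype.equivFin κ).symm
  have hg : range g = range f := (Fintype.equivFin κ).symm.surjective.range_comp f
  have hext : IsExtension (convexHull ℝ (range g)) (stdSimplex ℝ (Fin (Fintype.card κ))) :=
    ⟨⟨_, finite_range _, (convexHull_rangle_single_eq_stdSimplex ℝ (Fin (Fintype.card κ))).symm⟩,
      _, image_stdSimplex_linearCombination g⟩
  calc xc (convexHull ℝ (range f)) ≤ polySize (stdSimplex ℝ (Fin (Fintype.card κ))) :=
        hg ▸ xc_le_polySize hext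
    _ ≤ Fintype.card κ := by simpa using polySize_stdSimplex_le (κ := Fin (Fintype.card κ))

lemma compl_matchingGraph_adj {p : ℕ} {a b : Fin p × Bool} :
    (matchingGraph p)ᶜ.Adj a b ↔ a.1 ≠ b.1 := by
  simp only [matchingGraph, SimpleGraph.compl_adj, SimpleGraph.fromRel_adj]
  grind

section ComplMatching

variable {V : Type*} {G : SimpleGraph V} {p : ℕ} (e : G ≃g (matchingGraph p)ᶜ)

lemma not_adj_iff_fst_apply_eq {u v : V} : ¬ G.Adj u v ↔ (e u).1 = (e v).1 := by
  rw [← e.map_adj_iff, compl_matchingGraph_adj, not_not]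

-- `none` encodes `∅` separately because there is no `some (i, ∅)` when `p = 0`.
def pairSubset : Option (Fin p × Set Bool) → Set V
  | none => ∅
  | some (i, B) => e ⁻¹' ({i} ×ˢ B)

lemma range_pairSubset : range (pairSubset e) = {S | ∀ u ∈ S, ∀ v ∈ S, ¬ G.Adj u v} := by
  ext S
  constructor
  · rintro ⟨_ | ⟨i, B⟩, rfl⟩
    · simp [pairSubset]
    · rintro u ⟨hu, -⟩ v ⟨hv, -⟩
      exact (not_adj_iff_fst_apply_eq e).2 (hu.trans hv.symm)
  · intro hS
    rcases S.eq_empty_or_nonempty with rfl | ⟨u, hu⟩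
    · exact ⟨none, rfl⟩
    refine ⟨some ((e u).1, {b | e.symm ((e u).1, b) ∈ S}), ?_⟩
    ext w
    simp only [pairSubset, mem_preimage, mem_prod, mem_singleton_iff, mem_ofPred_eq]
    constructor
    · rintro ⟨hw, hwS⟩
      rwa [← hw, Prod.mk.eta, e.symm_apply_apply] at hwS
    · intro hwS
      have hw := (not_adj_iff_fst_apply_eq e).1 (hS w hwS u hu)
      exact ⟨hw, by rwa [← hw, Prod.mk.eta, e.symm_apply_apply]⟩

lemma stab_eq_convexHull_range_pairSubset [Fintype V] :
    stab G = convexHull ℝ (range fun t => (pairSubset e t).indicator 1) := by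
  change _ = convexHull ℝ (range ((fun S : Set V => S.indicator (1 : V → ℝ)) ∘ pairSubset e))
  rw [stab, range_comp, range_pairSubset]
  congr 1
  ext x
  simp [eq_comm]

end ComplMatching

/-- if `G` is the complement of the disjoint union of `p` edges (the
complement of a perfect matching on `2p` vertices), then `xc (STAB G) ≤ 4p + 1`. -/
theorem xc_stab_compl_matching {V : Type*} [Fintype V] (G : SimpleGraph V) (p : ℕ)
    (hiso : Nonempty (G ≃g (matchingGraph p)ᶜ)) :
    xc (stab G) ≤ 4 * p + 1 := by
  obtain ⟨e⟩ := hiso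
  calc xc (stab G) ≤ Fintype.card (Option (Fin p × Set Bool)) := by
        rw [stab_eq_convexHull_range_pairSubset e]
        exact xc_convexHull_range_le _
    _ = 4 * p + 1 := by simp [Fintype.card_set, mul_comm]
end
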